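/- The encoding map κ is injective on the set of finite sequences over {0, 1, □} that do not end in the blank symbol □: if two such sequences s and t (padded with trailing blanks to infinite sequences that are eventually blank) satisfy κ(s) = κ(t), then s = t. -/
import Mathlib


def sigmaVal : Option Bool → ℝ
  | none => 0
  | some false => -1
  | some true => 1

/-- Encoding of an (eventually blank) one-sided sequence. -/
noncomputable def kappa (t : ℕ → Option Bool) : ℝ :=
  (2 / 3) * ∑' i : ℕ, sigmaVal (t i) / 3 ^ i

/-- Finite partial sum of the encoding. -/
noncomputable def kapS (N : ℕ) (t : ℕ → Option Bool) : ℝ :=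
  ∑ i ∈ Finset.range N, sigmaVal (t i) / 3 ^ i

lemma abs_sigmaVal_le (a : Option Bool) : |sigmaVal a| ≤ 1 := by
  rcases a with _ | b
  · simp [sigmaVal]
  · cases b <;> simp [sigmaVal]

lemma kapS_abs_le (N : ℕ) (t : ℕ → Option Bool) : |kapS N t| ≤ 3 / 2 := by
  have h1 : |kapS N t| ≤ ∑ i ∈ Finset.range N, |sigmaVal (t i) / 3 ^ i| :=
    Finset.abs_sum_le_sum_abs _ _
  have h2 : ∑ i ∈ Finset.range N, |sigmaVal (t i) / 3 ^ i|
      ≤ ∑ i ∈ Finset.range N, (1 / 3 : ℝ) ^ i := by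
    apply Finset.sum_le_sum
    intro i _
    rw [abs_div, abs_pow]
    rw [div_pow, one_pow]
    have h3 : |(3 : ℝ)| = 3 := by norm_num
    rw [h3]
    gcongr
    exact abs_sigmaVal_le _
  have h4 : ∑ i ∈ Finset.range N, (1 / 3 : ℝ) ^ i ≤ 3 / 2 := by
    have := geom_sum_eq (by norm_num : (1 / 3 : ℝ) ≠ 1) N
    rw [this]
    have hp : (0 : ℝ) ≤ (1 / 3 : ℝ) ^ N := by positivity
    rw [div_le_iff_of_neg (by norm_num : (1 / 3 : ℝ) - 1 < 0)]
    linarith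
  linarith

lemma kapS_shift (N : ℕ) (t : ℕ → Option Bool) :
    kapS (N + 1) t = sigmaVal (t 0) + (1 / 3) * kapS N (fun n => t (n + 1)) := by
  unfold kapS
  rw [Finset.sum_range_succ']
  rw [Finset.mul_sum]
  simp only [pow_zero, div_one]
  rw [add_comm]
  congr 1
  apply Finset.sum_congr rfl
  intro i _
  rw [pow_succ]
  ring

lemma kapS_zero_of_blank (N : ℕ) (t : ℕ → Option Bool)
    (h : ∀ i, t i = none) : kapS N t = 0 := by
  unfold kapS
  apply Finset.sum_eq_zero
  intro i _
  rw [h i]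
  simp [sigmaVal]

lemma kapS_inj : ∀ N (s t : ℕ → Option Bool),
    (∀ n, s n = none → ∀ m ≥ n, s m = none) →
    (∀ n, t n = none → ∀ m ≥ n, t m = none) →
    (∀ n ≥ N, s n = none) → (∀ n ≥ N, t n = none) →
    kapS N s = kapS N t → s = t := by
  intro N
  induction N with
  | zero =>
    intro s t _ _ hsN htN _
    funext n
    rw [hsN n (Nat.zero_le n), htN n (Nat.zero_le n)]
  | succ N ih =>
    intro s t hs_tail ht_tail hsN htN heq
    set s' : ℕ → Option Bool := fun n => s (n + 1) with hs'
    set t' : ℕ → Option Bool := fun n => t (n + 1) with ht'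
    have hshift : sigmaVal (s 0) + (1 / 3) * kapS N s'
        = sigmaVal (t 0) + (1 / 3) * kapS N t' := by
      rw [← kapS_shift, ← kapS_shift, heq]
    have hAbs : |kapS N s'| ≤ 3 / 2 := kapS_abs_le N s'
    have hBbs : |kapS N t'| ≤ 3 / 2 := kapS_abs_le N t'
    have hA := abs_le.mp hAbs
    have hB := abs_le.mp hBbs
    -- if s 0 = none then kapS N s' = 0
    have hsz : s 0 = none → kapS N s' = 0 := fun h0 =>
      kapS_zero_of_blank N s' (fun i => hs_tail 0 h0 (i + 1) (Nat.zero_le _))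
    have htz : t 0 = none → kapS N t' = 0 := fun h0 =>
      kapS_zero_of_blank N t' (fun i => ht_tail 0 h0 (i + 1) (Nat.zero_le _))
    have h0 : s 0 = t 0 := by
      rcases hcs : s 0 with _ | bs <;> rcases hct : t 0 with _ | bt
      · rfl
      · exfalso
        have hz := hsz hcs
        rw [hcs, hct] at hshift
        cases bt <;> simp [sigmaVal, hz] at hshift <;> linarith [hB.1, hB.2]
      · exfalso
        have hz := htz hct
        rw [hcs, hct] at hshift
        cases bs <;> simp [sigmaVal, hz] at hshift <;> linarith [hA.1, hA.2]
      · rw [hcs, hct] at hshift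
        cases bs <;> cases bt <;> simp [sigmaVal] at hshift ⊢ <;>
          linarith [hA.1, hA.2, hB.1, hB.2]
    have hrest : kapS N s' = kapS N t' := by
      rw [h0] at hshift
      linarith
    have hse : s' = t' := by
      apply ih
      · intro n hn m hm
        exact hs_tail (n + 1) hn (m + 1) (by omega)
      · intro n hn m hm
        exact ht_tail (n + 1) hn (m + 1) (by omega)
      · intro n hn; exact hsN (n + 1) (by omega)
      · intro n hn; exact htN (n + 1) (by omega)
      · exact hrest
    funext n
    cases n with
    | zero => exact h0
    | succ m => exact congrFun hse m

lemma kappa_eq_kapS (N : ℕ) (t : ℕ → Option Bool)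
    (hN : ∀ n ≥ N, t n = none) : kappa t = (2 / 3) * kapS N t := by
  unfold kappa kapS
  congr 1
  apply tsum_eq_sum
  intro n hn
  have : t n = none := hN n (by simp only [Finset.mem_range] at hn; omega)
  rw [this]
  simp [sigmaVal]

/-- κ is injective on eventually-blank sequences whose blanks
form a tail (no internal blanks). -/
theorem kappa_injective (s t : ℕ → Option Bool)
    (hs_fin : ∃ N, ∀ n ≥ N, s n = none)
    (ht_fin : ∃ N, ∀ n ≥ N, t n = none)
    (hs_tail : ∀ n, s n = none → ∀ m ≥ n, s m = none)
    (ht_tail : ∀ n, t n = none → ∀ m ≥ n, t m = none)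
    (h : kappa s = kappa t) : s = t := by
  obtain ⟨Ns, hNs⟩ := hs_fin
  obtain ⟨Nt, hNt⟩ := ht_fin
  set N := max Ns Nt with hN
  have hsN : ∀ n ≥ N, s n = none := fun n hn => hNs n (le_trans (le_max_left _ _) hn)
  have htN : ∀ n ≥ N, t n = none := fun n hn => hNt n (le_trans (le_max_right _ _) hn)
  have hk : kapS N s = kapS N t := by
    have h1 := kappa_eq_kapS N s hsN
    have h2 := kappa_eq_kapS N t htN
    rw [h1, h2] at h
    linarith
  exact kapS_inj N s t hs_tail ht_tail hsN htN hk
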